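/- Let m ≥ 1 be an integer, let L_1,…,L_m ≥ 0 be initial machine loads, let s ≥ 0, and let b_1,…,b_r ∈ [0,s] be bag sizes with total volume W := ∑_{j=1}^r b_j. Define the fractional water level F := max{ min_{1≤i≤m} (L_i + x_i) : x_1,…,x_m ≥ 0, ∑_{i=1}^m x_i = W }. Then: (i) for every assignment τ : {1,…,r} → {1,…,m}, min_{1≤i≤m} ( L_i + ∑_{j : τ(j)=i} b_j ) ≤ F; and (ii) there exists an assignment τ : {1,…,r} → {1,…,m} with min_{1≤i≤m} ( L_i + ∑_{j : τ(j)=i} b_j ) ≥ F − s. -/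

import Mathlib

open scoped BigOperators

attribute [local instance] Classical.propDecidable

/-!
Greedy list scheduling keeps every machine that received a bag within `s` of the minimum
load: when a bag is placed, its machine was the least loaded one and the bag has size at most
`s`, while the minimum only grows. Hence, if a fractional distribution `x` of the same volume
had all levels `L i + x i` above `min load + s`, it would dominate the greedy loads on every
machine, strictly on the least loaded one, contradicting that both have total `∑ L + W`.
-/

open Finset

section Scheduling

variable {ι κ : Type*}

def fractionalLevels [Fintype ι] (L : ι → ℝ) (W : ℝ) : Set ℝ :=
  {v | ∃ x : ι → ℝ, (∀ i, 0 ≤ x i) ∧ (∑ i, x i) = W ∧ v = ⨅ i, (L i + x i)}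

lemma bddAbove_fractionalLevels [Fintype ι] [Nonempty ι] (L : ι → ℝ) (W : ℝ) :
    BddAbove (fractionalLevels L W) := by
  obtain ⟨i₀⟩ := ‹Nonempty ι›
  refine ⟨L i₀ + W, ?_⟩
  rintro _ ⟨x, hx, rfl, rfl⟩
  exact ciInf_le_of_le (Finite.bddBelow_range _) i₀
    (add_le_add_right (single_le_sum (fun i _ => hx i) (mem_univ i₀)) _)

variable [DecidableEq ι]

def load [Fintype κ] (L : ι → ℝ) (b : κ → ℝ) (τ : κ → ι) (i : ι) : ℝ :=
  L i + ∑ j, if τ j = i then b j else 0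

/-- The bound `L i` covers the machines that receive no bag. -/
def IsBalanced [Fintype ι] [Fintype κ] (L : ι → ℝ) (b : κ → ℝ) (s : ℝ) (τ : κ → ι) : Prop :=
  ∀ i, load L b τ i ≤ max (L i) ((⨅ k, load L b τ k) + s)

lemma sum_assigned [Fintype ι] [Fintype κ] (b : κ → ℝ) (τ : κ → ι) :
    ∑ i, ∑ j, (if τ j = i then b j else 0) = ∑ j, b j := by
  rw [sum_comm]
  simp

lemma assigned_nonneg [Fintype κ] {b : κ → ℝ} (hb : ∀ j, 0 ≤ b j) (τ : κ → ι) (i : ι) :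
    0 ≤ ∑ j, if τ j = i then b j else 0 :=
  sum_nonneg fun j _ => ite_nonneg (hb j) le_rfl

lemma load_snoc {n : ℕ} (L : ι → ℝ) (b : Fin (n + 1) → ℝ) (τ : Fin n → ι) (i₁ i : ι) :
    load L b (Fin.snoc τ i₁ : Fin (n + 1) → ι) i =
      load L (Fin.init b) τ i + if i₁ = i then b (Fin.last n) else 0 := by
  simp only [load, Fin.sum_univ_castSucc, Fin.snoc_castSucc, Fin.snoc_last, Fin.init, add_assoc]

variable [Fintype ι]

lemma iInf_load_mem_fractionalLevels [Fintype κ] (L : ι → ℝ) {b : κ → ℝ} (hb : ∀ j, 0 ≤ b j)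
    (τ : κ → ι) : ⨅ i, load L b τ i ∈ fractionalLevels L (∑ j, b j) :=
  ⟨_, assigned_nonneg hb τ, sum_assigned b τ, rfl⟩

/-- Greedy list scheduling: the last bag goes to a least loaded machine. -/
lemma exists_isBalanced [Nonempty ι] (L : ι → ℝ) {s : ℝ} :
    ∀ {r : ℕ} (b : Fin r → ℝ), (∀ j, 0 ≤ b j ∧ b j ≤ s) →
      ∃ τ : Fin r → ι, IsBalanced L b s τ
  | 0, _, _ => ⟨Fin.elim0, fun i => by simp [load]⟩
  | n + 1, b, hb => by
    obtain ⟨τ, hτ⟩ := exists_isBalanced L (Fin.init b) fun j => hb _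
    obtain ⟨i₁, hi₁⟩ := exists_eq_ciInf_of_finite (f := load L (Fin.init b) τ)
    refine ⟨Fin.snoc τ i₁, fun i => ?_⟩
    have hmin : (⨅ k, load L (Fin.init b) τ k) ≤ ⨅ k, load L b (Fin.snoc τ i₁ : _ → ι) k :=
      ciInf_mono (Finite.bddBelow_range _) fun k => by
        rw [load_snoc]
        exact le_add_of_nonneg_right (ite_nonneg (hb _).1 le_rfl)
    rw [load_snoc]
    split_ifs with h
    · subst h
      rw [hi₁]
      exact le_max_of_le_right (add_le_add hmin (hb _).2)
    · rw [add_zero]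
      exact (hτ i).trans (max_le_max le_rfl (add_le_add_left hmin s))

lemma IsBalanced.sSup_fractionalLevels_le [Nonempty ι] [Fintype κ] {L : ι → ℝ} {b : κ → ℝ}
    {s : ℝ} {τ : κ → ι} (hτ : IsBalanced L b s τ) (hb : ∀ j, 0 ≤ b j) (hs : 0 ≤ s) :
    sSup (fractionalLevels L (∑ j, b j)) ≤ (⨅ i, load L b τ i) + s := by
  refine csSup_le ⟨_, iInf_load_mem_fractionalLevels L hb τ⟩ ?_
  rintro _ ⟨x, hx, hW, rfl⟩
  by_contra! hlt
  have hle : ∀ i ∈ univ, load L b τ i ≤ L i + x i := fun i _ =>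
    (hτ i).trans <| max_le (le_add_of_nonneg_right (hx i))
      (hlt.le.trans (ciInf_le (Finite.bddBelow_range _) i))
  have hsum : ∑ i, load L b τ i = ∑ i, (L i + x i) := by
    simp only [load, sum_add_distrib, sum_assigned, hW]
  obtain ⟨i₀, hi₀⟩ := exists_eq_ciInf_of_finite (f := load L b τ)
  have := (sum_eq_sum_iff_of_le hle).1 hsum i₀ (mem_univ _)
  linarith [ciInf_le (Finite.bddBelow_range fun i => L i + x i) i₀]

end Scheduling

theorem stmt9_general (m : ℕ) (hm : 0 < m) (L : Fin m → ℝ)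
    (s : ℝ) (hs : 0 ≤ s) (r : ℕ) (b : Fin r → ℝ) (hb : ∀ j, 0 ≤ b j ∧ b j ≤ s) :
    (∀ τ : Fin r → Fin m,
      (⨅ i : Fin m, (L i + ∑ j : Fin r, if τ j = i then b j else 0)) ≤
        sSup {v : ℝ | ∃ x : Fin m → ℝ, (∀ i, 0 ≤ x i) ∧ (∑ i, x i) = (∑ j, b j) ∧
          v = ⨅ i : Fin m, (L i + x i)}) ∧
    ∃ τ : Fin r → Fin m,
      sSup {v : ℝ | ∃ x : Fin m → ℝ, (∀ i, 0 ≤ x i) ∧ (∑ i, x i) = (∑ j, b j) ∧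
          v = ⨅ i : Fin m, (L i + x i)} - s ≤
        ⨅ i : Fin m, (L i + ∑ j : Fin r, if τ j = i then b j else 0) := by
  have : Nonempty (Fin m) := ⟨⟨0, hm⟩⟩
  have hb₀ : ∀ j, 0 ≤ b j := fun j => (hb j).1
  refine ⟨fun τ => le_csSup (bddAbove_fractionalLevels L _)
    (iInf_load_mem_fractionalLevels L hb₀ τ), ?_⟩
  obtain ⟨τ, hτ⟩ := exists_isBalanced L b hb
  exact ⟨τ, sub_le_iff_le_add.2 (hτ.sSup_fractionalLevels_le hb₀ hs)⟩

/-- water-filling.  Given initial loads `L_i ≥ 0` on `m ≥ 1` machines and bags of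
sizes `b_j ∈ [0,s]` with total volume `W = ∑ b_j`, let `F` be the fractional water level, the
maximum of `min_i (L_i + x_i)` over all fractional distributions `x ≥ 0` with `∑ x_i = W`.
Then (i) every integral assignment achieves minimum load at most `F`, and (ii) some integral
assignment achieves minimum load at least `F − s`. -/
theorem stmt9 (m : ℕ) (hm : 0 < m) (L : Fin m → ℝ) (hL : ∀ i, 0 ≤ L i)
    (s : ℝ) (hs : 0 ≤ s) (r : ℕ) (b : Fin r → ℝ) (hb : ∀ j, 0 ≤ b j ∧ b j ≤ s) :
    (∀ τ : Fin r → Fin m,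
      (⨅ i : Fin m, (L i + ∑ j : Fin r, if τ j = i then b j else 0)) ≤
        sSup {v : ℝ | ∃ x : Fin m → ℝ, (∀ i, 0 ≤ x i) ∧ (∑ i, x i) = (∑ j, b j) ∧
          v = ⨅ i : Fin m, (L i + x i)}) ∧
    ∃ τ : Fin r → Fin m,
      sSup {v : ℝ | ∃ x : Fin m → ℝ, (∀ i, 0 ≤ x i) ∧ (∑ i, x i) = (∑ j, b j) ∧
          v = ⨅ i : Fin m, (L i + x i)} - s ≤
        ⨅ i : Fin m, (L i + ∑ j : Fin r, if τ j = i then b j else 0) :=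
  stmt9_general m hm L s hs r b hb
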